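/- Let G act primitively on the vertices and transitively on the arcs of a locally finite connectivity-one digraph Γ, and suppose some lobe Λ of Γ is finite with at least three vertices. If T is any tree on which G acts, and the setwise stabiliser G_{Λ} contains no hyperbolic element of Aut T, and G_{Λ} either fixes a vertex, stabilises an edge without inversion, or fixes an end of T, then G_{Λ} fixes some vertex of T; moreover, since G_{Λ} is transitive on VΛ, all vertices of Λ are equidistant in T from this fixed vertex. -/

import Mathlib

open Pointwise

section DigraphBasics

variable {V : Type*}

/-- Adjacency in a digraph given by its arc relation. -/
def DigraphAdj (A : V → V → Prop) (u v : V) : Prop := A u v ∨ A v u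

/-- The subdigraph induced on the set `S` is connected. -/
def ConnOn (A : V → V → Prop) (S : Set V) : Prop :=
  ∀ u ∈ S, ∀ v ∈ S,
    Relation.ReflTransGen (fun x y => DigraphAdj A x y ∧ x ∈ S ∧ y ∈ S) u v

/-- A vertex whose removal disconnects the digraph. -/
def IsCutVertex (A : V → V → Prop) (v : V) : Prop := ¬ ConnOn A {v}ᶜ

/-- A digraph has connectivity one if it is connected and the removal of some
single vertex disconnects it. -/
def ConnectivityOne (A : V → V → Prop) : Prop :=
  ConnOn A Set.univ ∧ ∃ v : V, IsCutVertex A v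

/-- The set `S` induces a subdigraph of connectivity strictly greater than one:
it is connected, has at least two vertices, and no single vertex disconnects it. -/
def TwoConnOn (A : V → V → Prop) (S : Set V) : Prop :=
  S.Nontrivial ∧ ConnOn A S ∧ ∀ w ∈ S, ConnOn A (S \ {w})

/-- A lobe of a digraph: a maximal set of vertices inducing a connected subdigraph
of connectivity strictly greater than one. -/
def IsLobe (A : V → V → Prop) (Λ : Set V) : Prop :=
  TwoConnOn A Λ ∧ ∀ Λ' : Set V, TwoConnOn A Λ' → Λ ⊆ Λ' → Λ' = Λ

/-- `r` restricts to an equivalence relation on `S`. -/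
def IsEquivRelOn (S : Set V) (r : V → V → Prop) : Prop :=
  (∀ u ∈ S, r u u) ∧ (∀ u ∈ S, ∀ v ∈ S, r u v → r v u) ∧
  (∀ u ∈ S, ∀ v ∈ S, ∀ w ∈ S, r u v → r v w → r u w)

/-- The subgroup `H` acts transitively on the set `S`. -/
def TransitiveOn {G : Type*} [Group G] [MulAction G V] (H : Subgroup G) (S : Set V) : Prop :=
  ∀ u ∈ S, ∀ v ∈ S, ∃ h ∈ H, h • u = v

/-- The subgroup `H` acts primitively on the set `S`: transitively, and every
`H`-invariant equivalence relation on `S` is trivial or universal. -/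
def PrimitiveOn {G : Type*} [Group G] [MulAction G V] (H : Subgroup G) (S : Set V) : Prop :=
  TransitiveOn H S ∧
  ∀ r : V → V → Prop, IsEquivRelOn S r →
    (∀ h ∈ H, ∀ u ∈ S, ∀ v ∈ S, r u v → r (h • u) (h • v)) →
    (∀ u ∈ S, ∀ v ∈ S, r u v → u = v) ∨ (∀ u ∈ S, ∀ v ∈ S, r u v)

/-- The subgroup `H` acts regularly on the set `S`: transitively, with
point stabilisers acting trivially on `S`. -/
def RegularOn {G : Type*} [Group G] [MulAction G V] (H : Subgroup G) (S : Set V) : Prop :=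
  TransitiveOn H S ∧ ∀ h ∈ H, ∀ v ∈ S, h • v = v → ∀ w ∈ S, h • w = w

end DigraphBasics
section Rays

variable {V : Type*}

/-- A ray (half-line) in a graph: a one-way infinite cycle-free path. -/
def IsRay (T : SimpleGraph V) (f : ℕ → V) : Prop :=
  Function.Injective f ∧ ∀ n : ℕ, T.Adj (f n) (f (n + 1))

/-- `v` is reachable from `u` by a path avoiding the set `F`. -/
def ReachAvoiding (T : SimpleGraph V) (F : Set V) (u v : V) : Prop :=
  Relation.ReflTransGen (fun x y => T.Adj x y ∧ x ∉ F ∧ y ∉ F) u v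

/-- Two rays are equivalent (belong to the same end) if for every finite set of
vertices the rays have points connected by a path avoiding it. -/
def RaysEquivalent (T : SimpleGraph V) (f g : ℕ → V) : Prop :=
  ∀ F : Finset V, ∃ m n : ℕ, f m ∉ (F : Set V) ∧ g n ∉ (F : Set V) ∧
    ReachAvoiding T (F : Set V) (f m) (g n)

end Rays

/-- A ray is thin if its end does not contain infinitely many pairwise disjoint
rays. -/
def IsThinRay {Θ : Type*} (T : SimpleGraph Θ) (f : ℕ → Θ) : Prop :=
  ¬ ∃ D : ℕ → (ℕ → Θ), (∀ i : ℕ, IsRay T (D i) ∧ RaysEquivalent T (D i) f) ∧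
      (∀ i j : ℕ, i ≠ j → ∀ m n : ℕ, D i m ≠ D j n)

/-- A hyperbolic automorphism of a graph: it leaves no nonempty finite set of
vertices invariant and fixes precisely two thin ends. -/
def IsHyperbolic {Θ : Type*} (T : SimpleGraph Θ) (φ : Θ → Θ) : Prop :=
  (∀ F : Finset Θ, F.Nonempty → ¬ ∀ a ∈ F, φ a ∈ F) ∧
  ∃ f₁ f₂ : ℕ → Θ, IsRay T f₁ ∧ IsRay T f₂ ∧ IsThinRay T f₁ ∧ IsThinRay T f₂ ∧
    ¬ RaysEquivalent T f₁ f₂ ∧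
    RaysEquivalent T (fun n => φ (f₁ n)) f₁ ∧
    RaysEquivalent T (fun n => φ (f₂ n)) f₂ ∧
    ∀ f : ℕ → Θ, IsRay T f → RaysEquivalent T (fun n => φ (f n)) f →
      (RaysEquivalent T f f₁ ∨ RaysEquivalent T f f₂)

/-!
The stabiliser `G_Λ` permutes the finite set `ι '' Λ`. A group acting on a tree without
inversions and preserving a finite nonempty vertex set fixes its centre, the midpoint (or the
middle edge) of a diametral geodesic, so `G_Λ` fixes a vertex `x`; equidistance from `x` then
follows once `G_Λ` is transitive on `Λ`.

By arc-transitivity any arc of `Λ` is carried onto any other by some `g`, and `g • Λ = Λ`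
because distinct lobes share at most one vertex. Hence `G_Λ` is transitive on the tails and on
the heads of the arcs of `Λ`, and it remains to find a vertex of `Λ` that is both. This is where
primitivity enters, together with the tree-like arrangement of lobes: every vertex has a unique
gate into `Λ`.
-/

namespace SimpleGraph

variable {V : Type*} {G : SimpleGraph V}

lemma dist_add_dist_le_length_of_mem_support {u v m : V} (w : G.Walk u v) (hm : m ∈ w.support) :
    G.dist u m + G.dist m v ≤ w.length := by
  classical
  calc G.dist u m + G.dist m v ≤ (w.takeUntil m hm).length + (w.dropUntil m hm).length :=
        Nat.add_le_add (G.dist_le _) (G.dist_le _)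
    _ = w.length := by rw [← Walk.length_append, w.take_spec hm]

lemma Connected.eq_or_adj_of_dist_le_one (hG : G.Connected) {u v : V} (h : G.dist u v ≤ 1) :
    u = v ∨ G.Adj u v := by
  rcases Nat.le_one_iff_eq_zero_or_eq_one.mp h with h | h
  · exact .inl (hG.dist_eq_zero_iff.mp h)
  · exact .inr (dist_eq_one_iff_adj.mp h)

lemma Connected.exists_dist_eq_of_le_dist (hG : G.Connected) {a b : V} {k : ℕ}
    (hk : k ≤ G.dist a b) : ∃ m, G.dist a m = k ∧ G.dist m b = G.dist a b - k := by
  obtain ⟨p, hp⟩ := hG.exists_walk_length_eq_dist a b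
  have h₁ := G.dist_le (p.take k)
  have h₂ := G.dist_le (p.drop k)
  have h₃ := hG.dist_triangle (u := a) (v := p.getVert k) (w := b)
  rw [Walk.take_length] at h₁
  rw [Walk.drop_length] at h₂
  exact ⟨p.getVert k, by omega, by omega⟩

lemma IsAcyclic.not_adj_of_adj_of_adj (hG : G.IsAcyclic) {x y z : V} (hxy : G.Adj x y)
    (hyz : G.Adj y z) : ¬ G.Adj x z := by
  intro hxz
  have hpath : (Walk.cons hxy (Walk.cons hyz .nil)).IsPath := by
    simp [Walk.isPath_def, hxy.ne, hyz.ne, hxz.ne]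
  exact hyz.ne (hG.eq_snd_of_adj_start hpath hxz (by simp)).symm

lemma Walk.IsPath.takeUntil_or_dropUntil_disjoint [DecidableEq V] {u v y : V} {p : G.Walk u v}
    (hp : p.IsPath) (hy : y ∈ p.support) {F : Set V} (hF : F.Subsingleton) (hyF : y ∉ F) :
    (∀ z ∈ (p.takeUntil y hy).support, z ∉ F) ∨ (∀ z ∈ (p.dropUntil y hy).support, z ∉ F) := by
  by_contra! h
  obtain ⟨⟨z, hz, hzF⟩, ⟨z', hz', hz'F⟩⟩ := h
  have hpath : ((p.takeUntil y hy).append (p.dropUntil y hy)).IsPath := by rwa [p.take_spec hy]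
  exact hpath.ne_of_mem_support_of_append (fun h => hyF (h ▸ hz'F)) hz hz' (hF hzF hz'F)

/-- In a tree every vertex `m` on the geodesic from `a` to `b` lies on the geodesic from `u` to
`a` or on the one from `u` to `b`. -/
lemma IsTree.dist_eq_add_or_dist_eq_add (hT : G.IsTree) {a b m : V}
    (hm : G.dist a m + G.dist m b = G.dist a b) (u : V) :
    G.dist u a = G.dist u m + G.dist m a ∨ G.dist u b = G.dist u m + G.dist m b := by
  classical
  have hG := hT.connected
  obtain ⟨p₁, hp₁⟩ := hG.exists_walk_length_eq_dist a m
  obtain ⟨p₂, hp₂⟩ := hG.exists_walk_length_eq_dist m b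
  obtain ⟨q₁, hq₁⟩ := hG.exists_walk_length_eq_dist u a
  obtain ⟨q₂, hq₂⟩ := hG.exists_walk_length_eq_dist u b
  have hpath : (p₁.append p₂).IsPath :=
    Walk.isPath_of_length_eq_dist _ (by rw [Walk.length_append, hp₁, hp₂, hm])
  have hbypass : p₁.append p₂ = (q₁.reverse.append q₂).bypass :=
    (hT.existsUnique_path a b).unique hpath (Walk.bypass_isPath _)
  have hmem : m ∈ (q₁.reverse.append q₂).support := by
    apply Walk.support_bypass_subset_support
    rw [← hbypass]
    exact (p₁.mem_support_append_iff p₂).mpr (.inl p₁.end_mem_support)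
  rw [Walk.mem_support_append_iff, Walk.support_reverse, List.mem_reverse] at hmem
  rcases hmem with hm | hm
  · have := dist_add_dist_le_length_of_mem_support q₁ hm
    have := hG.dist_triangle (u := u) (v := m) (w := a)
    left; omega
  · have := dist_add_dist_le_length_of_mem_support q₂ hm
    have := hG.dist_triangle (u := u) (v := m) (w := b)
    right; omega

lemma IsTree.dist_add_min_le_max (hT : G.IsTree) {a b m : V}
    (hm : G.dist a m + G.dist m b = G.dist a b) (u : V) :
    G.dist u m + min (G.dist a m) (G.dist m b) ≤ max (G.dist u a) (G.dist u b) := by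
  have := G.dist_comm (u := a) (v := m)
  rcases hT.dist_eq_add_or_dist_eq_add hm u with h | h <;> omega

/-- The vertices within distance `⌈diam S / 2⌉` of all of `S` are the midpoint(s) of a
diametral geodesic of `S`: one vertex, or two adjacent ones. -/
lemma IsTree.exists_center {S : Set V} (hT : G.IsTree) (hS : S.Finite) (hne : S.Nonempty) :
    ∃ (r : ℕ) (x y : V), (x = y ∨ G.Adj x y) ∧
      ∀ u, (∀ s ∈ S, G.dist u s ≤ r) ↔ u = x ∨ u = y := by
  have hG := hT.connected
  obtain ⟨⟨a, b⟩, ⟨ha, hb⟩, hdiam⟩ := Set.exists_max_image (S ×ˢ S)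
    (fun p => G.dist p.1 p.2) (hS.prod hS) (hne.prod hne)
  set D := G.dist a b
  obtain ⟨x, hax, hxb⟩ := hG.exists_dist_eq_of_le_dist (a := a) (b := b) (k := D / 2) (by omega)
  obtain ⟨y, hay, hyb⟩ := hG.exists_dist_eq_of_le_dist (a := a) (b := b) (k := D - D / 2) (by omega)
  have hx := hT.dist_add_min_le_max (a := a) (b := b) (m := x) (by omega)
  have hy := hT.dist_add_min_le_max (a := a) (b := b) (m := y) (by omega)
  have hcenter : ∀ m, (∀ u, G.dist u m + D / 2 ≤ max (G.dist u a) (G.dist u b)) →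
      ∀ s ∈ S, G.dist m s ≤ D - D / 2 := by
    intro m hm s hs
    have := hm s
    have : G.dist s a ≤ D := hdiam (s, a) ⟨hs, ha⟩
    have : G.dist s b ≤ D := hdiam (s, b) ⟨hs, hb⟩
    have := G.dist_comm (u := m) (v := s)
    omega
  have hball : ∀ u, (∀ s ∈ S, G.dist u s ≤ D - D / 2) →
      G.dist u x ≤ D - D / 2 - D / 2 ∧ G.dist u y ≤ D - D / 2 - D / 2 := by
    intro u hu
    have := hu a ha
    have := hu b hb
    have := hx u
    have := hy u
    omega
  have hxy : x = y ∨ G.Adj x y := by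
    have := (hball y (hcenter y fun u => by have := hy u; omega)).1
    exact hG.eq_or_adj_of_dist_le_one (by rw [G.dist_comm]; omega)
  refine ⟨D - D / 2, x, y, hxy, fun u => ⟨fun hu => ?_, ?_⟩⟩
  · obtain ⟨hux, huy⟩ := hball u hu
    by_cases hux0 : G.dist u x = 0
    · exact .inl (hG.dist_eq_zero_iff.mp hux0)
    by_cases huy0 : G.dist u y = 0
    · exact .inr (hG.dist_eq_zero_iff.mp huy0)
    have hxy' : G.Adj x y := hxy.resolve_left fun h => by subst h; omega
    exact absurd (dist_eq_one_iff_adj.mp (by omega : G.dist u y = 1))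
      (hT.isAcyclic.not_adj_of_adj_of_adj (dist_eq_one_iff_adj.mp (by omega)) hxy')
  · rintro (rfl | rfl)
    exacts [hcenter _ fun u => by have := hx u; omega, hcenter _ fun u => by have := hy u; omega]

section Action

variable {H : Type*} [Group H] [MulAction H V]

lemma Connected.dist_smul (hG : G.Connected)
    (hadj : ∀ (h : H) (u v : V), G.Adj u v → G.Adj (h • u) (h • v)) (h : H) (u v : V) :
    G.dist (h • u) (h • v) = G.dist u v := by
  have hle : ∀ (h : H) (u v : V), G.dist (h • u) (h • v) ≤ G.dist u v := by
    intro h u v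
    obtain ⟨p, hp⟩ := hG.exists_walk_length_eq_dist u v
    let f : G →g G := ⟨(h • ·), hadj h _ _⟩
    have := G.dist_le (p.map f)
    rwa [Walk.length_map, hp] at this
  refine le_antisymm (hle h u v) ?_
  simpa using hle h⁻¹ (h • u) (h • v)

/-- The group permutes the centres of `S`, which form a vertex or an edge, and inverts no edge. -/
theorem IsTree.exists_forall_smul_eq_of_finite (hT : G.IsTree)
    (hadj : ∀ (h : H) (u v : V), G.Adj u v → G.Adj (h • u) (h • v))
    (hnoinv : ∀ (h : H) (u v : V), G.Adj u v → ¬(h • u = v ∧ h • v = u))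
    {S : Set V} (hS : S.Finite) (hne : S.Nonempty) (hSinv : ∀ (h : H), ∀ s ∈ S, h • s ∈ S) :
    ∃ x : V, ∀ h : H, h • x = x := by
  obtain ⟨r, x, y, hxy, hcenter⟩ := hT.exists_center hS hne
  have hmaps : ∀ (h : H) (u : V), (u = x ∨ u = y) → h • u = x ∨ h • u = y := by
    intro h u hu
    refine (hcenter _).mp fun s hs => ?_
    rw [← smul_inv_smul h s, hT.connected.dist_smul hadj]
    exact (hcenter u).mpr hu _ (hSinv h⁻¹ s hs)
  refine ⟨x, fun h => ?_⟩
  rcases hmaps h x (.inl rfl) with hx | hx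
  · exact hx
  rcases hxy with rfl | hxy
  · exact hx
  rcases hmaps h y (.inr rfl) with hy | hy
  · exact (hnoinv h x y hxy ⟨hx, hy⟩).elim
  · exact absurd (smul_left_cancel h (hx.trans hy.symm)) hxy.ne

end Action

end SimpleGraph

section Digraph

open Relation SimpleGraph

variable {V : Type*} {A : V → V → Prop}

lemma DigraphAdj.symm {u v : V} (h : DigraphAdj A u v) : DigraphAdj A v u := Or.symm h

/-- The step relation of `ConnOn A S`. -/
def AdjWithin (A : V → V → Prop) (S : Set V) (x y : V) : Prop :=
  DigraphAdj A x y ∧ x ∈ S ∧ y ∈ S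

lemma AdjWithin.symm {S : Set V} {x y : V} (h : AdjWithin A S x y) : AdjWithin A S y x :=
  ⟨h.1.symm, h.2.2, h.2.1⟩

lemma reflTransGen_adjWithin_symm {S : Set V} {u v : V}
    (h : ReflTransGen (AdjWithin A S) u v) : ReflTransGen (AdjWithin A S) v u := by
  induction h with
  | refl => exact .refl
  | tail _ hstep ih => exact .head hstep.symm ih

lemma reflTransGen_adjWithin_mono {S T : Set V} (hST : S ⊆ T) {u v : V}
    (h : ReflTransGen (AdjWithin A S) u v) : ReflTransGen (AdjWithin A T) u v :=
  ReflTransGen.mono (fun _ _ hxy => ⟨hxy.1, hST hxy.2.1, hST hxy.2.2⟩) _ _ h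

lemma connOn_of_forall_exists_reflTransGen {S K : Set V} (hKS : K ⊆ S) (hK : ConnOn A K)
    (hS : ∀ u ∈ S, ∃ c ∈ K, ReflTransGen (AdjWithin A S) u c) : ConnOn A S := by
  intro u hu v hv
  obtain ⟨c, hc, huc⟩ := hS u hu
  obtain ⟨d, hd, hvd⟩ := hS v hv
  exact (huc.trans (reflTransGen_adjWithin_mono hKS (hK c hc d hd))).trans
    (reflTransGen_adjWithin_symm hvd)

lemma ConnOn.exists_digraphAdj_ne {S : Set V} (hS : ConnOn A S) {u v : V} (hu : u ∈ S)
    (hv : v ∈ S) (huv : u ≠ v) : ∃ w ∈ S, w ≠ u ∧ DigraphAdj A u w := by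
  have hchain : ReflTransGen (AdjWithin A S) u v := hS u hu v hv
  clear hu hv
  induction hchain using ReflTransGen.head_induction_on with
  | refl => exact absurd rfl huv
  | @head a c hstep _ ih =>
    by_cases hca : c = a
    · subst hca
      exact ih huv
    · exact ⟨c, hstep.2.2, hca, hstep.1⟩

lemma TwoConnOn.connOn_diff {S F : Set V} (h : TwoConnOn A S) (hF : F.Subsingleton) :
    ConnOn A (S \ F) := by
  by_cases hw : ∃ w ∈ F, w ∈ S
  · obtain ⟨w, hwF, hwS⟩ := hw
    rw [hF.eq_singleton_of_mem hwF]
    exact h.2.2 w hwS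
  · push Not at hw
    rw [sdiff_eq_left.mpr (Set.disjoint_left.mpr fun x hxS hxF => hw x hxF hxS)]
    exact h.2.1

lemma twoConnOn_of_forall_connOn_diff {S : Set V} (hS : S.Nontrivial)
    (h : ∀ F : Set V, F.Subsingleton → ConnOn A (S \ F)) : TwoConnOn A S :=
  ⟨hS, by simpa using h ∅ Set.subsingleton_empty, fun w _ => h {w} Set.subsingleton_singleton⟩

lemma TwoConnOn.union {L₁ L₂ : Set V} (h₁ : TwoConnOn A L₁) (h₂ : TwoConnOn A L₂) {x y : V}
    (hx₁ : x ∈ L₁) (hx₂ : x ∈ L₂) (hy₁ : y ∈ L₁) (hy₂ : y ∈ L₂) (hxy : x ≠ y) :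
    TwoConnOn A (L₁ ∪ L₂) := by
  refine twoConnOn_of_forall_connOn_diff (h₁.1.mono Set.subset_union_left) fun F hF => ?_
  obtain ⟨p, hp₁, hp₂, hpF⟩ : ∃ p ∈ L₁, p ∈ L₂ ∧ p ∉ F := by
    by_cases hxF : x ∈ F
    · exact ⟨y, hy₁, hy₂, fun hyF => hxy (hF hxF hyF)⟩
    · exact ⟨x, hx₁, hx₂, hxF⟩
  refine connOn_of_forall_exists_reflTransGen (K := L₁ \ F)
    (Set.sdiff_subset_sdiff_left Set.subset_union_left) (h₁.connOn_diff hF) ?_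
  rintro u ⟨hu | hu, huF⟩
  · exact ⟨u, ⟨hu, huF⟩, .refl⟩
  · exact ⟨p, ⟨hp₁, hpF⟩, reflTransGen_adjWithin_mono
      (Set.sdiff_subset_sdiff_left Set.subset_union_right)
      (h₂.connOn_diff hF u ⟨hu, huF⟩ p ⟨hp₂, hpF⟩)⟩

lemma IsLobe.eq_of_mem_of_mem {L₁ L₂ : Set V} (h₁ : IsLobe A L₁) (h₂ : IsLobe A L₂) {x y : V}
    (hx₁ : x ∈ L₁) (hx₂ : x ∈ L₂) (hy₁ : y ∈ L₁) (hy₂ : y ∈ L₂) (hxy : x ≠ y) : L₁ = L₂ := by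
  have hunion := h₁.1.union h₂.1 hx₁ hx₂ hy₁ hy₂ hxy
  exact (h₁.2 _ hunion Set.subset_union_left).symm.trans (h₂.2 _ hunion Set.subset_union_right)

lemma SimpleGraph.Walk.reflTransGen_adjWithin {S : Set V} {u v : V}
    (w : (fromRel A).Walk u v) (hw : ∀ z ∈ w.support, z ∈ S) :
    ReflTransGen (AdjWithin A S) u v := by
  induction w with
  | nil => exact .refl
  | cons h p ih =>
    refine .head ⟨h.2, hw _ (by simp), hw _ (by simp)⟩ (ih fun z hz => hw z ?_)
    simp [hz]

lemma TwoConnOn.union_support {Λ : Set V} (hΛ : TwoConnOn A Λ) {c₁ c₂ : V} (hc₁ : c₁ ∈ Λ)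
    (hc₂ : c₂ ∈ Λ) {Q : (fromRel A).Walk c₁ c₂} (hQ : Q.IsPath) :
    TwoConnOn A (Λ ∪ {z | z ∈ Q.support}) := by
  classical
  refine twoConnOn_of_forall_connOn_diff (hΛ.1.mono Set.subset_union_left) fun F hF => ?_
  refine connOn_of_forall_exists_reflTransGen (K := Λ \ F)
    (Set.sdiff_subset_sdiff_left Set.subset_union_left) (hΛ.connOn_diff hF) ?_
  rintro u ⟨hu | hu, huF⟩
  · exact ⟨u, ⟨hu, huF⟩, .refl⟩
  have hsub : ∀ {a b : V} (R : (fromRel A).Walk a b), (∀ z ∈ R.support, z ∈ Q.support) →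
      (∀ z ∈ R.support, z ∉ F) → ∀ z ∈ R.support, z ∈ (Λ ∪ {z | z ∈ Q.support}) \ F :=
    fun R hRQ hRF z hz => ⟨.inr (hRQ z hz), hRF z hz⟩
  rcases hQ.takeUntil_or_dropUntil_disjoint hu hF huF with hF' | hF'
  · refine ⟨c₁, ⟨hc₁, hF' _ (Walk.start_mem_support _)⟩, reflTransGen_adjWithin_symm ?_⟩
    exact (Q.takeUntil u hu).reflTransGen_adjWithin
      (hsub _ (fun _ hz => Walk.support_takeUntil_subset_support _ hu hz) hF')
  · refine ⟨c₂, ⟨hc₂, hF' _ (Walk.end_mem_support _)⟩, ?_⟩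
    exact (Q.dropUntil u hu).reflTransGen_adjWithin
      (hsub _ (fun _ hz => Walk.support_dropUntil_subset_support _ hu hz) hF')

end Digraph

section Gate

open Relation SimpleGraph

variable {V : Type*} {A : V → V → Prop} {Λ : Set V}

/-- `c ∈ Λ` is a gate of `x` into `Λ`: some walk from `c` to `x` meets `Λ` only at its start. -/
def IsGate (A : V → V → Prop) (Λ : Set V) (c x : V) : Prop :=
  c ∈ Λ ∧ ReflTransGen (fun p q => DigraphAdj A p q ∧ q ∉ Λ) c x

lemma IsGate.refl {c : V} (hc : c ∈ Λ) : IsGate A Λ c c := ⟨hc, .refl⟩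

lemma IsGate.tail {c y z : V} (h : IsGate A Λ c y) (hyz : DigraphAdj A y z) (hz : z ∉ Λ) :
    IsGate A Λ c z :=
  ⟨h.1, h.2.tail ⟨hyz, hz⟩⟩

lemma exists_isGate (hconn : ConnOn A Set.univ) (hΛ : Λ.Nonempty) (x : V) :
    ∃ c, IsGate A Λ c x := by
  obtain ⟨l, hl⟩ := hΛ
  have hchain : ReflTransGen (AdjWithin A Set.univ) l x := hconn l trivial x trivial
  induction hchain with
  | refl => exact ⟨l, .refl hl⟩
  | @tail y z _ hstep ih =>
    by_cases hz : z ∈ Λ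
    · exact ⟨z, .refl hz⟩
    · obtain ⟨c, hc⟩ := ih
      exact ⟨c, hc.tail hstep.1 hz⟩

lemma IsGate.of_reflTransGen {S : Set V} {c u v : V} (h : IsGate A Λ c u)
    (hS : ∀ z ∈ S, z ∈ Λ → z = c) (huv : ReflTransGen (AdjWithin A S) u v) :
    IsGate A Λ c v := by
  induction huv with
  | refl => exact h
  | @tail y z _ hstep ih =>
    by_cases hz : z ∈ Λ
    · rw [hS z hstep.2.2 hz]
      exact .refl h.1
    · exact ih.tail hstep.1 hz

lemma IsGate.exists_walk {c x : V} (h : IsGate A Λ c x) :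
    ∃ w : (fromRel A).Walk c x, ∀ z ∈ w.support, z ∈ Λ → z = c := by
  obtain ⟨hc, hchain⟩ := h
  induction hchain with
  | refl => exact ⟨.nil, by simp⟩
  | @tail y z _ hstep ih =>
    obtain ⟨w, hw⟩ := ih
    by_cases hyz : y = z
    · exact hyz ▸ ⟨w, hw⟩
    refine ⟨w.concat (show (fromRel A).Adj y z from ⟨hyz, hstep.1⟩), fun t ht htΛ => ?_⟩
    rw [Walk.support_concat, List.mem_append, List.mem_singleton] at ht
    rcases ht with ht | rfl
    · exact hw t ht htΛ
    · exact absurd htΛ hstep.2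

lemma SimpleGraph.Walk.exists_notMem_of_mem_edges {c u v : V} (w : (fromRel A).Walk u v)
    (hw : ∀ z ∈ w.support, z ∈ Λ → z = c) {e : Sym2 V} (he : e ∈ w.edges) : ∃ z ∈ e, z ∉ Λ := by
  induction e using Sym2.ind with
  | _ a b =>
  by_contra! hab
  have hne := (w.adj_of_mem_edges he).ne
  exact hne ((hw a (w.fst_mem_support_of_mem_edges he) (hab a (by simp))).trans
    (hw b (w.snd_mem_support_of_mem_edges he) (hab b (by simp))).symm)

/-- Two gates of `x` would be joined through `x` by a path outside `Λ`, which could be added to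
`Λ` as an ear. -/
lemma IsLobe.isGate_unique (hΛ : IsLobe A Λ) {c₁ c₂ x : V} (h₁ : IsGate A Λ c₁ x)
    (h₂ : IsGate A Λ c₂ x) : c₁ = c₂ := by
  classical
  by_contra hne
  obtain ⟨w₁, hw₁⟩ := h₁.exists_walk
  obtain ⟨w₂, hw₂⟩ := h₂.exists_walk
  set Q := (w₁.append w₂.reverse).bypass
  have hQedges : ∀ e ∈ Q.edges, ∃ z ∈ e, z ∉ Λ := by
    intro e he
    rcases List.mem_append.mp (Walk.edges_append _ _ ▸ Walk.edges_bypass_subset_edges _ he)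
      with he | he
    · exact w₁.exists_notMem_of_mem_edges hw₁ he
    · exact w₂.exists_notMem_of_mem_edges hw₂ (by simpa using he)
  have hQnil : ¬ Q.Nil := fun h => hne h.eq
  have hsnd : Q.snd ∈ Λ := by
    rw [← hΛ.2 _ (hΛ.1.union_support h₁.1 h₂.1 (Walk.bypass_isPath _)) Set.subset_union_left]
    exact .inr (Q.getVert_mem_support 1)
  obtain ⟨z, hz, hzΛ⟩ := hQedges _ (Walk.mk_start_snd_mem_edges hQnil)
  rcases Sym2.mem_iff.mp hz with rfl | rfl
  exacts [hzΛ h₁.1, hzΛ hsnd]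

lemma IsLobe.exists_isGate_mem_iff (hΛ : IsLobe A Λ) {X : Set V} {c u : V}
    (h : IsGate A Λ c u) : (∃ c' ∈ X, IsGate A Λ c' u) ↔ c ∈ X :=
  ⟨fun ⟨_, hc'X, hc'⟩ => hΛ.isGate_unique hc' h ▸ hc'X, fun hc => ⟨c, hc, h⟩⟩

/-- A lobe other than `Λ` meets `Λ` in at most one vertex, so all its vertices share a gate. -/
lemma IsLobe.exists_forall_isGate (hconn : ConnOn A Set.univ) (hΛ : IsLobe A Λ) {L : Set V}
    (hL : IsLobe A L) (hLΛ : L ≠ Λ) : ∃ c, ∀ u ∈ L, IsGate A Λ c u := by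
  by_cases hmeet : ∃ c ∈ L, c ∈ Λ
  · obtain ⟨c, hcL, hcΛ⟩ := hmeet
    refine ⟨c, fun u hu => (IsGate.refl hcΛ).of_reflTransGen (S := L) (fun z hzL hzΛ => ?_)
      (hL.1.2.1 c hcL u hu)⟩
    by_contra hzc
    exact hLΛ (hL.eq_of_mem_of_mem hΛ hzL hzΛ hcL hcΛ hzc)
  · push Not at hmeet
    obtain ⟨u₀, hu₀⟩ := hL.1.1.nonempty
    obtain ⟨c, hc⟩ := exists_isGate hconn (hΛ.1.1.nonempty) u₀
    exact ⟨c, fun u hu => hc.of_reflTransGen (S := L) (fun z hzL hzΛ => absurd hzΛ (hmeet z hzL))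
      (hL.1.2.1 u₀ hu₀ u hu)⟩

end Gate

section Action

open Relation

variable {V G : Type*} [Group G] [MulAction G V] {A : V → V → Prop}

lemma DigraphAdj.smul (hA : ∀ (g : G) (u v : V), A u v → A (g • u) (g • v)) (g : G) {u v : V}
    (h : DigraphAdj A u v) : DigraphAdj A (g • u) (g • v) :=
  h.imp (hA g u v) (hA g v u)

lemma ConnOn.smul (hA : ∀ (g : G) (u v : V), A u v → A (g • u) (g • v)) (g : G) {S : Set V}
    (h : ConnOn A S) : ConnOn A (g • S) := by
  rintro _ ⟨u, hu, rfl⟩ _ ⟨v, hv, rfl⟩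
  exact ReflTransGen.lift (g • ·) (fun _ _ hxy => ⟨hxy.1.smul hA g,
    Set.smul_mem_smul_set hxy.2.1, Set.smul_mem_smul_set hxy.2.2⟩) _ _ (h u hu v hv)

lemma TwoConnOn.smul (hA : ∀ (g : G) (u v : V), A u v → A (g • u) (g • v)) (g : G)
    {S : Set V} (h : TwoConnOn A S) : TwoConnOn A (g • S) := by
  refine ⟨by simpa only [Set.image_smul] using h.1.image (MulAction.injective g),
    h.2.1.smul hA g, ?_⟩
  rintro _ ⟨w, hw, rfl⟩
  rw [← Set.smul_set_singleton, ← Set.smul_set_sdiff]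
  exact (h.2.2 w hw).smul hA g

lemma IsLobe.smul (hA : ∀ (g : G) (u v : V), A u v → A (g • u) (g • v)) (g : G) {Λ : Set V}
    (h : IsLobe A Λ) : IsLobe A (g • Λ) := by
  refine ⟨h.1.smul hA g, fun Λ' hΛ' hsub => ?_⟩
  have := h.2 _ (hΛ'.smul hA g⁻¹) (Set.smul_set_subset_iff_subset_inv_smul_set.mp hsub)
  rw [← this, smul_inv_smul]

end Action

section Tails

variable {V : Type*} {A : V → V → Prop} {S : Set V}

/-- Tails of the non-loop arcs inside `S`; `tails (flip A) S` are their heads. -/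
def tails (A : V → V → Prop) (S : Set V) : Set V :=
  {u | u ∈ S ∧ ∃ v ∈ S, v ≠ u ∧ A u v}

lemma tails_subset : tails A S ⊆ S := fun _ h => h.1

lemma ConnOn.mem_tails_or_mem_tails_flip (hS : ConnOn A S) {u v : V} (hu : u ∈ S) (hv : v ∈ S)
    (huv : u ≠ v) : u ∈ tails A S ∨ u ∈ tails (flip A) S := by
  obtain ⟨w, hw, hwu, huw | hwu'⟩ := hS.exists_digraphAdj_ne hu hv huv
  exacts [.inl ⟨hu, w, hw, hwu, huw⟩, .inr ⟨hu, w, hw, hwu, hwu'⟩]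

lemma TwoConnOn.exists_mem_tails_and_mem_tails_flip (hS : TwoConnOn A S) :
    (tails A S).Nonempty ∧ (tails (flip A) S).Nonempty := by
  obtain ⟨x, hx, y, hy, hxy⟩ := hS.1
  obtain ⟨w, hw, hwx, hxw | hwx'⟩ := hS.2.1.exists_digraphAdj_ne hx hy hxy
  · exact ⟨⟨x, hx, w, hw, hwx, hxw⟩, ⟨w, hw, x, hx, hwx.symm, hxw⟩⟩
  · exact ⟨⟨w, hw, x, hx, hwx.symm, hwx'⟩, ⟨x, hx, w, hw, hwx, hwx'⟩⟩

end Tails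

section Transitivity

open Relation

variable {V G : Type*} [Group G] [MulAction G V] {A : V → V → Prop} {Λ : Set V}

lemma tails_smul (hA : ∀ (g : G) (u v : V), A u v → A (g • u) (g • v)) (g : G) (S : Set V) :
    tails A (g • S) = g • tails A S := by
  ext x
  constructor
  · rintro ⟨⟨x, hx, rfl⟩, _, ⟨v, hv, rfl⟩, hvx, hxv⟩
    refine Set.smul_mem_smul_set ⟨hx, v, hv, fun h => hvx (h ▸ rfl), ?_⟩
    simpa using hA g⁻¹ _ _ hxv
  · rintro ⟨x, ⟨hx, v, hv, hvx, hxv⟩, rfl⟩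
    exact ⟨Set.smul_mem_smul_set hx, g • v, Set.smul_mem_smul_set hv,
      fun h => hvx (smul_left_cancel g h), hA g x v hxv⟩

lemma PrimitiveOn.eq_or_forall_of_equivalence
    (h : PrimitiveOn (⊤ : Subgroup G) (Set.univ : Set V)) {r : V → V → Prop}
    (hr : Equivalence r) (hinv : ∀ (g : G) (u v : V), r u v → r (g • u) (g • v)) :
    (∀ u v, r u v → u = v) ∨ ∀ u v, r u v := by
  rcases h.2 r ⟨fun u _ => hr.refl u, fun _ _ _ _ => hr.symm, fun _ _ _ _ _ _ => hr.trans⟩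
    (fun g _ u _ v _ => hinv g u v) with h | h
  exacts [.inl fun u v => h u trivial v trivial, .inr fun u v => h u trivial v trivial]

lemma Relation.EqvGen.smul {r : V → V → Prop} (hr : ∀ (g : G) (u v : V), r u v → r (g • u) (g • v))
    (g : G) {u v : V} (h : EqvGen r u v) : EqvGen r (g • u) (g • v) := by
  induction h with
  | rel u v h => exact .rel _ _ (hr g u v h)
  | refl => exact .refl _
  | symm _ _ _ ih => exact .symm _ _ ih
  | trans _ _ _ _ _ ih₁ ih₂ => exact .trans _ _ _ ih₁ ih₂

variable (G) in
def SameTranslate (X : Set V) (u v : V) : Prop :=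
  ∃ g : G, u ∈ g • X ∧ v ∈ g • X

lemma SameTranslate.of_mem {X : Set V} {u v : V} (hu : u ∈ X) (hv : v ∈ X) :
    SameTranslate G X u v :=
  ⟨1, by rwa [one_smul], by rwa [one_smul]⟩

lemma SameTranslate.smul {X : Set V} {u v : V} (h : SameTranslate G X u v) (g : G) :
    SameTranslate G X (g • u) (g • v) := by
  obtain ⟨g', hu, hv⟩ := h
  exact ⟨g * g', by rw [mul_smul]; exact Set.smul_mem_smul_set hu,
    by rw [mul_smul]; exact Set.smul_mem_smul_set hv⟩

lemma IsLobe.exists_smul_eq_of_arc (hA : ∀ (g : G) (u v : V), A u v → A (g • u) (g • v))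
    (harctrans : ∀ u v u' v' : V, A u v → A u' v' → ∃ g : G, g • u = u' ∧ g • v = v')
    (hΛ : IsLobe A Λ) {u v u' v' : V} (hu : u ∈ Λ) (hv : v ∈ Λ) (hu' : u' ∈ Λ) (hv' : v' ∈ Λ)
    (hne : u' ≠ v') (huv : A u v) (hu'v' : A u' v') :
    ∃ g ∈ MulAction.stabilizer G Λ, g • u = u' ∧ g • v = v' := by
  obtain ⟨g, rfl, rfl⟩ := harctrans u v u' v' huv hu'v'
  exact ⟨g, (hΛ.smul hA g).eq_of_mem_of_mem hΛ (Set.smul_mem_smul_set hu) hu'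
    (Set.smul_mem_smul_set hv) hv' hne, rfl, rfl⟩

lemma IsLobe.exists_isGate_iff_of_mem_smul (hA : ∀ (g : G) (u v : V), A u v → A (g • u) (g • v))
    (hconn : ConnOn A Set.univ) (hΛ : IsLobe A Λ) {X Y : Set V} (hXΛ : X ⊆ Λ)
    (hX : ∀ g : G, g • Λ = Λ → g • X = X) (hXY : X ⊆ Y ∨ Disjoint X Y) {g : G} {u v : V}
    (hu : u ∈ g • X) (hv : v ∈ g • X) :
    (∃ c ∈ Y, IsGate A Λ c u) ↔ (∃ c ∈ Y, IsGate A Λ c v) := by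
  by_cases hgΛ : g • Λ = Λ
  · rw [hX g hgΛ] at hu hv
    rw [hΛ.exists_isGate_mem_iff (.refl (hXΛ hu)), hΛ.exists_isGate_mem_iff (.refl (hXΛ hv))]
    rcases hXY with hXY | hXY
    exacts [iff_of_true (hXY hu) (hXY hv),
      iff_of_false (Set.disjoint_left.mp hXY hu) (Set.disjoint_left.mp hXY hv)]
  · obtain ⟨c, hc⟩ := hΛ.exists_forall_isGate hconn (hΛ.smul hA g) hgΛ
    have hXL : g • X ⊆ g • Λ := Set.smul_set_mono hXΛ
    rw [hΛ.exists_isGate_mem_iff (hc u (hXL hu)), hΛ.exists_isGate_mem_iff (hc v (hXL hv))]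

lemma IsLobe.exists_isGate_tails_iff_of_eqvGen
    (hA : ∀ (g : G) (u v : V), A u v → A (g • u) (g • v)) (hconn : ConnOn A Set.univ)
    (hΛ : IsLobe A Λ) (hdisj : Disjoint (tails A Λ) (tails (flip A) Λ)) {u v : V}
    (h : EqvGen (fun u v => SameTranslate G (tails A Λ) u v ∨
      SameTranslate G (tails (flip A) Λ) u v) u v) :
    (∃ c ∈ tails A Λ, IsGate A Λ c u) ↔ (∃ c ∈ tails A Λ, IsGate A Λ c v) := by
  induction h with
  | rel u v h =>
    rcases h with ⟨g, hu, hv⟩ | ⟨g, hu, hv⟩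
    · refine hΛ.exists_isGate_iff_of_mem_smul hA hconn tails_subset
        (fun g hg => ?_) (.inl subset_rfl) hu hv
      rw [← tails_smul hA, hg]
    · refine hΛ.exists_isGate_iff_of_mem_smul hA hconn tails_subset
        (fun g hg => ?_) (.inr hdisj.symm) hu hv
      rw [← tails_smul (A := flip A) (fun g u v => hA g v u), hg]
  | refl => exact .rfl
  | symm _ _ _ ih => exact ih.symm
  | trans _ _ _ _ _ ih₁ ih₂ => exact ih₁.trans ih₂

lemma exists_ne_of_three_of_forall_or {α : Type*} {S X Y : Set α}
    (hcover : ∀ u ∈ S, u ∈ X ∨ u ∈ Y)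
    (hthree : ∃ a b c : α, a ∈ S ∧ b ∈ S ∧ c ∈ S ∧ a ≠ b ∧ a ≠ c ∧ b ≠ c) :
    ∃ u v, u ≠ v ∧ (u ∈ X ∧ v ∈ X ∨ u ∈ Y ∧ v ∈ Y) := by
  obtain ⟨a, b, c, ha, hb, hc, hab, hac, hbc⟩ := hthree
  rcases hcover a ha with ha | ha <;> rcases hcover b hb with hb | hb <;>
    rcases hcover c hc with hc | hc
  all_goals first
    | exact ⟨a, b, hab, by tauto⟩
    | exact ⟨a, c, hac, by tauto⟩
    | exact ⟨b, c, hbc, by tauto⟩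

/-- If no vertex of `Λ` were both a tail and a head, the equivalence relation generated by
"lying in a common translate of the tails, or of the heads" would contradict primitivity: it is
not trivial since `Λ` has three vertices, and it does not relate a tail to a head of `Λ`, since
whether the gate into `Λ` is a tail is constant along it. -/
lemma IsLobe.tails_inter_tails_flip_nonempty
    (hA : ∀ (g : G) (u v : V), A u v → A (g • u) (g • v))
    (hprim : PrimitiveOn (⊤ : Subgroup G) (Set.univ : Set V)) (hconn : ConnOn A Set.univ)
    (hΛ : IsLobe A Λ) (hthree : ∃ a b c : V, a ∈ Λ ∧ b ∈ Λ ∧ c ∈ Λ ∧ a ≠ b ∧ a ≠ c ∧ b ≠ c) :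
    (tails A Λ ∩ tails (flip A) Λ).Nonempty := by
  by_contra hempty
  have hdisj : Disjoint (tails A Λ) (tails (flip A) Λ) :=
    Set.disjoint_iff_inter_eq_empty.mpr (Set.not_nonempty_iff_eq_empty.mp hempty)
  have hcover : ∀ u ∈ Λ, u ∈ tails A Λ ∨ u ∈ tails (flip A) Λ := fun u hu => by
    obtain ⟨v, hv, hvu⟩ := hΛ.1.1.exists_ne u
    exact hΛ.1.2.1.mem_tails_or_mem_tails_flip hu hv hvu.symm
  let R : V → V → Prop := fun u v =>
    SameTranslate G (tails A Λ) u v ∨ SameTranslate G (tails (flip A) Λ) u v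
  rcases hprim.eq_or_forall_of_equivalence (EqvGen.is_equivalence R)
    (EqvGen.smul fun g u v huv => huv.imp (·.smul g) (·.smul g)) with htriv | huniv
  · obtain ⟨u, v, huv, hX | hY⟩ := exists_ne_of_three_of_forall_or hcover hthree
    exacts [huv (htriv u v (.rel _ _ (.inl (.of_mem hX.1 hX.2)))),
      huv (htriv u v (.rel _ _ (.inr (.of_mem hY.1 hY.2))))]
  · obtain ⟨⟨t, ht⟩, ⟨h, hh⟩⟩ := hΛ.1.exists_mem_tails_and_mem_tails_flip
    have := hΛ.exists_isGate_tails_iff_of_eqvGen hA hconn hdisj (huniv t h)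
    rw [hΛ.exists_isGate_mem_iff (.refl ht.1), hΛ.exists_isGate_mem_iff (.refl hh.1)] at this
    exact Set.disjoint_left.mp hdisj (this.mp ht) hh

theorem IsLobe.transitiveOn_stabilizer (hA : ∀ (g : G) (u v : V), A u v → A (g • u) (g • v))
    (hprim : PrimitiveOn (⊤ : Subgroup G) (Set.univ : Set V))
    (harctrans : ∀ u v u' v' : V, A u v → A u' v' → ∃ g : G, g • u = u' ∧ g • v = v')
    (hconn : ConnOn A Set.univ) (hΛ : IsLobe A Λ)
    (hthree : ∃ a b c : V, a ∈ Λ ∧ b ∈ Λ ∧ c ∈ Λ ∧ a ≠ b ∧ a ≠ c ∧ b ≠ c) :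
    TransitiveOn (MulAction.stabilizer G Λ) Λ := by
  obtain ⟨w, ⟨hw, v', hv', hv'w, hwv'⟩, ⟨-, v'', hv'', hv''w, hv''w'⟩⟩ :=
    hΛ.tails_inter_tails_flip_nonempty hA hprim hconn hthree
  have hto : ∀ a ∈ Λ, ∃ g ∈ MulAction.stabilizer G Λ, g • a = w := by
    intro a ha
    obtain ⟨b, hb, hba⟩ := hΛ.1.1.exists_ne a
    rcases hΛ.1.2.1.mem_tails_or_mem_tails_flip ha hb hba.symm with
      ⟨-, v, hv, -, hav⟩ | ⟨-, v, hv, -, hva⟩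
    · obtain ⟨g, hg, hga, -⟩ :=
        hΛ.exists_smul_eq_of_arc hA harctrans ha hv hw hv' hv'w.symm hav hwv'
      exact ⟨g, hg, hga⟩
    · obtain ⟨g, hg, -, hga⟩ :=
        hΛ.exists_smul_eq_of_arc hA harctrans hv ha hv'' hw hv''w hva hv''w'
      exact ⟨g, hg, hga⟩
  intro a ha b hb
  obtain ⟨g, hg, hga⟩ := hto a ha
  obtain ⟨g', hg', hg'b⟩ := hto b hb
  exact ⟨g'⁻¹ * g, mul_mem (inv_mem hg') hg, by rw [mul_smul, hga, ← hg'b, inv_smul_smul]⟩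

end Transitivity

theorem lobe_stabiliser_fixes_tree_vertex_general
    {Ω Θ : Type*} {G : Type*} [Group G] [MulAction G Ω] [MulAction G Θ]
    (A : Ω → Ω → Prop)
    (hA : ∀ (g : G) (u v : Ω), A u v ↔ A (g • u) (g • v))
    (hvprim : PrimitiveOn (⊤ : Subgroup G) (Set.univ : Set Ω))
    (harctrans : ∀ u v u' v' : Ω, A u v → A u' v' → ∃ g : G, g • u = u' ∧ g • v = v')
    (hconn1 : ConnectivityOne A)
    (Λ : Set Ω) (hΛ : IsLobe A Λ) (hΛfin : Λ.Finite)
    (hthree : ∃ a b c : Ω, a ∈ Λ ∧ b ∈ Λ ∧ c ∈ Λ ∧ a ≠ b ∧ a ≠ c ∧ b ≠ c)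
    (T : SimpleGraph Θ) (hT : T.IsTree)
    (hadjT : ∀ (g : G) (u v : Θ), T.Adj u v ↔ T.Adj (g • u) (g • v))
    (hnoinv : ∀ (g : G) (u v : Θ), T.Adj u v → ¬(g • u = v ∧ g • v = u))
    (ι : Ω → Θ)
    (hιequiv : ∀ (g : G) (a : Ω), ι (g • a) = g • ι a) :
    ∃ x : Θ, (∀ h ∈ MulAction.stabilizer G Λ, h • x = x) ∧
      ∀ a ∈ Λ, ∀ b ∈ Λ, T.dist (ι a) x = T.dist (ι b) x := by
  have htrans := hΛ.transitiveOn_stabilizer (fun g u v => (hA g u v).mp) hvprim harctrans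
    hconn1.1 hthree
  have hadj : ∀ (g : G) (u v : Θ), T.Adj u v → T.Adj (g • u) (g • v) :=
    fun g u v => (hadjT g u v).mp
  obtain ⟨x, hx⟩ := hT.exists_forall_smul_eq_of_finite (H := MulAction.stabilizer G Λ)
    (fun h => hadj h) (fun h => hnoinv h) (hΛfin.image ι) (hΛ.1.1.nonempty.image ι) <| by
      rintro ⟨h, hh⟩ _ ⟨a, ha, rfl⟩
      exact ⟨h • a, hh ▸ Set.smul_mem_smul_set ha, hιequiv h a⟩
  refine ⟨x, fun h hh => hx ⟨h, hh⟩, fun a ha b hb => ?_⟩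
  obtain ⟨g, hg, rfl⟩ := htrans a ha b hb
  have hgx : g • x = x := hx ⟨g, hg⟩
  calc T.dist (ι a) x = T.dist (g • ι a) (g • x) := (hT.connected.dist_smul hadj g _ _).symm
    _ = T.dist (ι (g • a)) x := by rw [hιequiv, hgx]

/-- Let `G` act primitively on the vertices and transitively on
the arcs of a locally finite connectivity-one digraph `Γ`, and let `Λ` be a finite
lobe with at least three vertices. Let `T` be any tree on which `G` acts (the
vertices of `Γ` embedding equivariantly in `T`), such that the setwise stabiliser
`G_{Λ}` contains no hyperbolic element and `G_{Λ}` fixes a vertex, stabilises an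
edge without inversion, or fixes an end of `T`. Then `G_{Λ}` fixes some vertex of
`T`, and all vertices of `Λ` are equidistant in `T` from this fixed vertex. -/
theorem lobe_stabiliser_fixes_tree_vertex
    {Ω Θ : Type*} {G : Type*} [Group G] [MulAction G Ω] [MulAction G Θ]
    (A : Ω → Ω → Prop)
    (hA : ∀ (g : G) (u v : Ω), A u v ↔ A (g • u) (g • v))
    (hvprim : PrimitiveOn (⊤ : Subgroup G) (Set.univ : Set Ω))
    (harctrans : ∀ u v u' v' : Ω, A u v → A u' v' → ∃ g : G, g • u = u' ∧ g • v = v')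
    (hconn1 : ConnectivityOne A)
    (hlf : ∀ v : Ω, {w : Ω | DigraphAdj A v w}.Finite)
    (Λ : Set Ω) (hΛ : IsLobe A Λ) (hΛfin : Λ.Finite)
    (hthree : ∃ a b c : Ω, a ∈ Λ ∧ b ∈ Λ ∧ c ∈ Λ ∧ a ≠ b ∧ a ≠ c ∧ b ≠ c)
    (T : SimpleGraph Θ) (hT : T.IsTree)
    (hadjT : ∀ (g : G) (u v : Θ), T.Adj u v ↔ T.Adj (g • u) (g • v))
    (hnoinv : ∀ (g : G) (u v : Θ), T.Adj u v → ¬(g • u = v ∧ g • v = u))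
    (ι : Ω → Θ) (hι : Function.Injective ι)
    (hιequiv : ∀ (g : G) (a : Ω), ι (g • a) = g • ι a)
    (hnohyp : ∀ h ∈ MulAction.stabilizer G Λ, ¬ IsHyperbolic T (fun θ => h • θ))
    (htrich :
      (∃ v : Θ, ∀ h ∈ MulAction.stabilizer G Λ, h • v = v) ∨
      (∃ u v : Θ, T.Adj u v ∧
        ∀ h ∈ MulAction.stabilizer G Λ, ({h • u, h • v} : Set Θ) = {u, v}) ∨
      (∃ f : ℕ → Θ, IsRay T f ∧
        ∀ h ∈ MulAction.stabilizer G Λ, RaysEquivalent T (fun n => h • f n) f)) :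
    ∃ x : Θ, (∀ h ∈ MulAction.stabilizer G Λ, h • x = x) ∧
      ∀ a ∈ Λ, ∀ b ∈ Λ, T.dist (ι a) x = T.dist (ι b) x :=
  lobe_stabiliser_fixes_tree_vertex_general A hA hvprim harctrans hconn1 Λ hΛ hΛfin hthree T hT
    hadjT hnoinv ι hιequiv
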